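/- arXiv:1104.4725 — 2 statements merged into one kernel-verified Lean document; each statement's English description precedes it below -/
import Mathlib

section
/- Let T > 0, let Y₀(t) = 0 for all t, and let Y₁(t) = e^{t-T}(T+1) - 1 for t ∈ [0,T]. Then Y₀ solves Y₀(t) = -∫_t^T Y₀(s) ds, Y₁ solves Y₁(t) = t - ∫_t^T Y₁(s) ds, and Y₁(t) < Y₀(t) for all t ∈ [0, T - log(T+1)). -/
theorem stmt_4 (T : ℝ) (hT : 0 < T)
    (Y₀ Y₁ : ℝ → ℝ)
    (hY₀ : ∀ t, Y₀ t = 0)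
    (hY₁ : ∀ t, Y₁ t = Real.exp (t - T) * (T + 1) - 1) :
    (∀ t ∈ Set.Icc (0:ℝ) T, Y₀ t = - ∫ s in t..T, Y₀ s) ∧
    (∀ t ∈ Set.Icc (0:ℝ) T, Y₁ t = t - ∫ s in t..T, Y₁ s) ∧
    (∀ t ∈ Set.Ico (0:ℝ) (T - Real.log (T + 1)), Y₁ t < Y₀ t) := by
  refine ⟨?_, ?_, ?_⟩
  · intro t ht
    simp [hY₀]
  · intro t ht
    have h1 : (∫ s in t..T, Y₁ s) = ∫ s in t..T, (Real.exp (s - T) * (T + 1) - 1) := by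
      simp [hY₁]
    have h2 : (∫ s in t..T, (Real.exp (s - T) * (T + 1) - 1))
        = (Real.exp (T - T) - Real.exp (t - T)) * (T + 1) - (T - t) := by
      rw [intervalIntegral.integral_sub, intervalIntegral.integral_mul_const,
        intervalIntegral.integral_comp_sub_right (fun x => Real.exp x) T,
        integral_exp]
      · norm_num
      · exact (Real.continuous_exp.comp (continuous_id.sub continuous_const)).mul
          continuous_const |>.intervalIntegrable _ _
      · exact intervalIntegrable_const
    rw [hY₁, h1, h2]
    simp
    ring
  · intro t ht
    rw [hY₀, hY₁]
    have hpos : (0:ℝ) < T + 1 := by linarith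
    have h2 : t - T < -Real.log (T + 1) := by linarith [ht.2]
    have h3 := Real.exp_lt_exp.mpr h2
    rw [Real.exp_neg, Real.exp_log hpos] at h3
    have h4 : Real.exp (t - T) * (T + 1) < 1 := by
      have := mul_lt_mul_of_pos_right h3 hpos
      rwa [inv_mul_cancel₀ (ne_of_gt hpos)] at this
    linarith
end

section
/- Let ψ₁ ∈ L²(0,T) be deterministic with ψ₁ ∉ L^p(0, T-δ) for every p > 2 and some fixed δ ∈ (0,T). Then the process Y(t) = ∫_0^t ψ₁(s)dW(s) + ψ₁(t)(T-t) satisfies ∫_0^T E|Y(t)|^p dt = ∞ for every p > 2, even though ψ(t) := ∫_0^T ψ₁(s)dW(s) satisfies E∫_0^T |ψ(t)|^p dt < ∞ for all p > 1. -/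
open MeasureTheory Set ProbabilityTheory
open scoped NNReal ENNReal

/-! On `(0, T - δ]` the weight `T - t` is at least `δ`, so `|ψ₁ t| ≤ δ⁻¹ |Y t - J 0 t|`. The
Wiener integrals `J 0 t` are centred Gaussians whose variances are bounded by `∫_0^T ψ₁²`, so their
`p`-th moments are uniformly bounded; hence `Y ∈ L^p` would force `ψ₁ ∈ L^p(0, T - δ)`. The
bound on `ψ` only uses that Gaussians have moments of every order. -/

lemma ENNReal.ofReal_abs_rpow {p : ℝ} (hp : 0 ≤ p) (x : ℝ) :
    ENNReal.ofReal (|x| ^ p) = ‖x‖ₑ ^ p := by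
  rw [Real.enorm_eq_ofReal_abs, ENNReal.ofReal_rpow_of_nonneg (abs_nonneg x) hp]

lemma lintegral_enorm_rpow_gaussianReal_lt_top (m : ℝ) (v : ℝ≥0) {p : ℝ} (hp : 0 < p) :
    ∫⁻ x, ‖x‖ₑ ^ p ∂gaussianReal m v < ∞ := by
  have h := lintegral_rpow_enorm_lt_top_of_eLpNorm_lt_top (by simpa using hp)
    ENNReal.ofReal_ne_top
    (memLp_id_gaussianReal' (μ := m) (v := v) _ ENNReal.ofReal_ne_top).eLpNorm_lt_top
  rwa [ENNReal.toReal_ofReal hp.le] at h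

lemma gaussianReal_zero_eq_map_sqrt_mul (v : ℝ≥0) :
    gaussianReal 0 v = (gaussianReal 0 1).map (√(v : ℝ) * ·) := by
  rw [gaussianReal_map_const_mul, mul_zero]
  congr
  ext
  simp [Real.sq_sqrt v.coe_nonneg]

lemma lintegral_enorm_rpow_gaussianReal_mono {v w : ℝ≥0} (hvw : v ≤ w) {p : ℝ} (hp : 0 ≤ p) :
    ∫⁻ x, ‖x‖ₑ ^ p ∂gaussianReal 0 v ≤ ∫⁻ x, ‖x‖ₑ ^ p ∂gaussianReal 0 w := by
  simp only [gaussianReal_zero_eq_map_sqrt_mul v, gaussianReal_zero_eq_map_sqrt_mul w]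
  rw [lintegral_map (by fun_prop) (by fun_prop), lintegral_map (by fun_prop) (by fun_prop)]
  refine lintegral_mono fun x => ENNReal.rpow_le_rpow ?_ hp
  simp only [enorm_mul]
  gcongr
  simp only [Real.enorm_eq_ofReal_abs, abs_of_nonneg (Real.sqrt_nonneg _)]
  gcongr

lemma lintegral_enorm_rpow_le_of_map_eq_gaussianReal {Ω : Type*} {m0 : MeasurableSpace Ω}
    {μ : Measure Ω} {X : Ω → ℝ} (hX : Measurable X) {v w : ℝ≥0}
    (hXv : μ.map X = gaussianReal 0 v) (hvw : v ≤ w) {p : ℝ} (hp : 0 ≤ p) :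
    ∫⁻ ω, ‖X ω‖ₑ ^ p ∂μ ≤ ∫⁻ x, ‖x‖ₑ ^ p ∂gaussianReal 0 w := by
  rw [← lintegral_map (f := fun x : ℝ => ‖x‖ₑ ^ p) (by fun_prop) hX, hXv]
  exact lintegral_enorm_rpow_gaussianReal_mono hvw hp

section DeterministicPart

variable {α Ω E : Type*} {mα : MeasurableSpace α} {mΩ : MeasurableSpace Ω} {μ : Measure Ω}
  [IsProbabilityMeasure μ] [NormedAddCommGroup E] {p : ℝ}

lemma enorm_rpow_le_lintegral_add {X : Ω → E} (hX : AEStronglyMeasurable X μ) (c : E)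
    (hp : 1 ≤ p) :
    ‖c‖ₑ ^ p ≤ 2 ^ (p - 1) * (∫⁻ ω, ‖X ω + c‖ₑ ^ p ∂μ + ∫⁻ ω, ‖X ω‖ₑ ^ p ∂μ) := by
  have hpointwise (ω : Ω) : ‖c‖ₑ ^ p ≤ 2 ^ (p - 1) * (‖X ω + c‖ₑ ^ p + ‖X ω‖ₑ ^ p) := by
    calc ‖c‖ₑ ^ p = ‖X ω + c - X ω‖ₑ ^ p := by rw [add_sub_cancel_left]
      _ ≤ (‖X ω + c‖ₑ + ‖X ω‖ₑ) ^ p := by gcongr; exact enorm_sub_le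
      _ ≤ _ := ENNReal.rpow_add_le_mul_rpow_add_rpow _ _ hp
  calc ‖c‖ₑ ^ p = ∫⁻ _, ‖c‖ₑ ^ p ∂μ := by simp
    _ ≤ ∫⁻ ω, 2 ^ (p - 1) * (‖X ω + c‖ₑ ^ p + ‖X ω‖ₑ ^ p) ∂μ := lintegral_mono hpointwise
    _ = _ := by
      rw [lintegral_const_mul' _ _ (by simp), lintegral_add_right' _ (by fun_prop)]

lemma setLIntegral_enorm_rpow_le_of_lintegral_le {ν : Measure α} {s : Set α}
    (hs : MeasurableSet s) {Z : α → Ω → E} (hZ : ∀ a, AEStronglyMeasurable (Z a) μ) (f : α → E)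
    (hp : 1 ≤ p) {K : ℝ≥0∞} (hZK : ∀ a ∈ s, ∫⁻ ω, ‖Z a ω‖ₑ ^ p ∂μ ≤ K) :
    ∫⁻ a in s, ‖f a‖ₑ ^ p ∂ν
      ≤ 2 ^ (p - 1) * (∫⁻ a in s, ∫⁻ ω, ‖Z a ω + f a‖ₑ ^ p ∂μ ∂ν + K * ν s) := by
  calc ∫⁻ a in s, ‖f a‖ₑ ^ p ∂ν
      ≤ ∫⁻ a in s, 2 ^ (p - 1) * (∫⁻ ω, ‖Z a ω + f a‖ₑ ^ p ∂μ + K) ∂ν :=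
        setLIntegral_mono' hs fun a ha =>
          (enorm_rpow_le_lintegral_add (hZ a) (f a) hp).trans (by gcongr; exact hZK a ha)
    _ = _ := by
      rw [lintegral_const_mul' _ _ (by simp), lintegral_add_right _ measurable_const,
        setLIntegral_const]

end DeterministicPart

lemma memLp_restrict_of_lintegral_enorm_mul_rpow_lt_top {α 𝕜 : Type*} {m0 : MeasurableSpace α}
    {ν : Measure α} [NormedField 𝕜] {f w : α → 𝕜} {s : Set α} (hs : MeasurableSet s)
    (hf : AEStronglyMeasurable f (ν.restrict s)) {c : ℝ} (hc : 0 < c)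
    (hw : ∀ a ∈ s, c ≤ ‖w a‖) {p : ℝ} (hp : 0 < p)
    (hfw : ∫⁻ a in s, ‖f a * w a‖ₑ ^ p ∂ν < ∞) :
    MemLp f (ENNReal.ofReal p) (ν.restrict s) := by
  have hpointwise : ∀ a ∈ s, ‖f a‖ₑ ^ p ≤ ENNReal.ofReal c⁻¹ ^ p * ‖f a * w a‖ₑ ^ p := by
    intro a ha
    rw [← ENNReal.mul_rpow_of_nonneg _ _ hp.le, ← ofReal_norm, ← ofReal_norm,
      ← ENNReal.ofReal_mul (by positivity), norm_mul]
    gcongr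
    rw [le_inv_mul_iff₀ hc, mul_comm c]
    exact mul_le_mul_of_nonneg_left (hw a ha) (norm_nonneg _)
  refine ⟨hf, (eLpNorm_lt_top_iff_lintegral_rpow_enorm_lt_top (by simpa using hp)
    ENNReal.ofReal_ne_top).mpr ?_⟩
  rw [ENNReal.toReal_ofReal hp.le]
  refine (setLIntegral_mono' hs hpointwise).trans_lt ?_
  rw [lintegral_const_mul' _ _ (by finiteness)]
  finiteness

/-- If `ψ₁ ∈ L²(0,T)` is deterministic but `ψ₁ ∉ L^p(0,T-δ)` for every `p > 2`, then
`Y(t) = ∫_0^t ψ₁ dW + ψ₁(t)(T-t)` fails to be in `L^p` for every `p > 2`, although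
`ψ(t) = ∫_0^T ψ₁ dW` belongs to every `L^p`, `p > 1`. Here `J a b` denotes the Wiener
integral `∫_a^b ψ₁ dW`, which is Gaussian with mean `0` and variance `∫_a^b ψ₁²`. -/
theorem stmt_12 {Ω : Type*} {m0 : MeasurableSpace Ω} (μ : Measure Ω) [IsProbabilityMeasure μ]
    (T δ : ℝ) (hδ : 0 < δ) (hδT : δ < T)
    (ψ₁ : ℝ → ℝ) (hψ₁m : Measurable ψ₁)
    (hψ₁ : MemLp ψ₁ 2 (volume.restrict (Set.Ioc 0 T)))
    (hψ₁bad : ∀ p : ℝ, 2 < p →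
      ¬ MemLp ψ₁ (ENNReal.ofReal p) (volume.restrict (Set.Ioc 0 (T - δ))))
    (J : ℝ → ℝ → Ω → ℝ)
    (hJmeas : ∀ a b, Measurable (J a b))
    (hgauss : ∀ a b : ℝ, a ≤ b → Measure.map (J a b) μ
      = ProbabilityTheory.gaussianReal 0 ((∫ s in a..b, (ψ₁ s) ^ 2).toNNReal))
    (Y : ℝ → Ω → ℝ) (ψ : Ω → ℝ)
    (hY : ∀ t ω, Y t ω = J 0 t ω + ψ₁ t * (T - t))
    (hψ : ∀ ω, ψ ω = J 0 T ω) :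
    (∀ p : ℝ, 2 < p →
      ∫⁻ t in Set.Ioc (0:ℝ) T, ∫⁻ ω, ENNReal.ofReal (|Y t ω| ^ p) ∂μ = ⊤) ∧
    (∀ p : ℝ, 1 < p →
      ∫⁻ t in Set.Ioc (0:ℝ) T, ∫⁻ ω, ENNReal.ofReal (|ψ ω| ^ p) ∂μ < ⊤) := by
  have hT : 0 < T := hδ.trans hδT
  refine ⟨fun p hp => ?_, fun p hp => ?_⟩
  · have hp0 : 0 < p := by linarith
    simp_rw [ENNReal.ofReal_abs_rpow hp0.le]
    by_contra hY_fin
    set v := (∫ s in 0..T, ψ₁ s ^ 2).toNNReal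
    have hvar : ∀ t ∈ Ioc 0 T, (∫ s in 0..t, ψ₁ s ^ 2).toNNReal ≤ v := fun t ht =>
      Real.toNNReal_le_toNNReal <| intervalIntegral.integral_mono_interval le_rfl ht.1.le ht.2
        (ae_of_all _ fun _ => sq_nonneg _)
        ((intervalIntegrable_iff_integrableOn_Ioc_of_le hT.le).mpr hψ₁.integrable_sq)
    have hJ_le : ∀ t ∈ Ioc 0 T, ∫⁻ ω, ‖J 0 t ω‖ₑ ^ p ∂μ ≤ ∫⁻ x, ‖x‖ₑ ^ p ∂gaussianReal 0 v :=
      fun t ht => lintegral_enorm_rpow_le_of_map_eq_gaussianReal (hJmeas 0 t)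
        (hgauss 0 t ht.1.le) (hvar t ht) hp0.le
    have hdet : ∫⁻ t in Ioc 0 T, ‖ψ₁ t * (T - t)‖ₑ ^ p < ∞ := by
      refine (setLIntegral_enorm_rpow_le_of_lintegral_le measurableSet_Ioc
        (fun t => (hJmeas 0 t).aestronglyMeasurable) _ (by linarith) hJ_le).trans_lt ?_
      simp_rw [← hY]
      have hK := lintegral_enorm_rpow_gaussianReal_lt_top 0 v hp0
      have hvol := measure_Ioc_lt_top (μ := volume) (a := 0) (b := T)
      finiteness
    exact hψ₁bad p hp <| memLp_restrict_of_lintegral_enorm_mul_rpow_lt_top measurableSet_Ioc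
      hψ₁m.aestronglyMeasurable hδ (fun t ht => le_abs.mpr (.inl (by linarith [ht.2]))) hp0
      ((lintegral_mono_set (Ioc_subset_Ioc_right (by linarith))).trans_lt hdet)
  · have hp0 : 0 < p := by linarith
    simp_rw [ENNReal.ofReal_abs_rpow hp0.le, hψ]
    rw [setLIntegral_const, ← lintegral_map (f := fun x : ℝ => ‖x‖ₑ ^ p) (by fun_prop) (hJmeas 0 T),
      hgauss 0 T hT.le]
    exact ENNReal.mul_lt_top (lintegral_enorm_rpow_gaussianReal_lt_top _ _ hp0) measure_Ioc_lt_top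
end
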